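/- Let a ∈ ℝ and r ∈ ℝ with r ≠ 0. There is a 5-dimensional real Lie algebra 𝔤 with basis e₁,...,e₅ and dual basis e¹,...,e⁵ whose Chevalley–Eilenberg differentials satisfy (writing e^{ij} for eⁱ∧eʲ): de¹ = 0, de² = r e^{12} + a e^{13} + a e^{24} + (a(r² + a²)/(2r)) e^{25} + (a²/r) e^{34} + (a²(r² + a²)/(2r²)) e^{35}, de³ = a e^{12} + (a²/r) e^{13} − r e^{24} − ((r² + a²)/2) e^{25} − a e^{34} − (a(r² + a²)/(2r)) e^{35}, de⁴ = −((r² + a²)²/(2r²)) e^{15} + ((r² + a²)/r) e^{23}, de⁵ = −2e^{14} − 2e^{23} (i.e., the bracket determined by these equations satisfies the Jacobi identity). Moreover, 𝔤 is solvable, the quadruplet η = e⁵, ω₁ = e^{12} + e^{34}, ω₂ = e^{13} − e^{24}, ω₃ = e^{14} + e^{23} is a hypo-contact structure on 𝔤, and 𝔤 is isomorphic to 𝔥₅. -/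

import Mathlib

noncomputable section

/-- Chevalley–Eilenberg differential of a 1-form on a Lie algebra. -/
def dOne {V : Type*} [LieRing V] [LieAlgebra ℝ V] (α : V → ℝ) (x y : V) : ℝ :=
  -α ⁅x, y⁆

/-- Chevalley–Eilenberg differential of a 2-form on a Lie algebra. -/
def dTwo {V : Type*} [LieRing V] [LieAlgebra ℝ V] (ω : V → V → ℝ) (x y z : V) : ℝ :=
  -ω ⁅x, y⁆ z + ω ⁅x, z⁆ y - ω ⁅y, z⁆ x

/-- Chevalley–Eilenberg differential of a 3-form on a Lie algebra. -/
def dThree {V : Type*} [LieRing V] [LieAlgebra ℝ V] (σ : V → V → V → ℝ)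
    (x y z w : V) : ℝ :=
  -σ ⁅x, y⁆ z w + σ ⁅x, z⁆ y w - σ ⁅x, w⁆ y z
    - σ ⁅y, z⁆ x w + σ ⁅y, w⁆ x z - σ ⁅z, w⁆ x y

/-- Wedge product of two 1-forms, as an alternating bilinear map. -/
def wedge1 {V : Type*} [LieRing V] [LieAlgebra ℝ V] (α β : V →ₗ[ℝ] ℝ) :
    V →ₗ[ℝ] V →ₗ[ℝ] ℝ :=
  LinearMap.mk₂ ℝ (fun x y => α x * β y - α y * β x)
    (fun m₁ m₂ n => by simp [map_add]; ring)
    (fun c m n => by simp [map_smul, smul_eq_mul]; ring)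
    (fun m n₁ n₂ => by simp [map_add]; ring)
    (fun c m n => by simp [map_smul, smul_eq_mul]; ring)

/-- Wedge product of a 1-form and a 2-form. -/
def wedge12 {V : Type*} (α : V → ℝ) (ω : V → V → ℝ) (x y z : V) : ℝ :=
  α x * ω y z - α y * ω x z + α z * ω x y

/-- Wedge product of two 2-forms. -/
def wedge22 {V : Type*} (ω τ : V → V → ℝ) (x y z w : V) : ℝ :=
  ω x y * τ z w - ω x z * τ y w + ω x w * τ y z
    + ω y z * τ x w - ω y w * τ x z + ω z w * τ x y

/-- Wedge product of a 4-form and a 1-form. -/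
def wedge41 {V : Type*} (v : V → V → V → V → ℝ) (α : V → ℝ)
    (x₀ x₁ x₂ x₃ x₄ : V) : ℝ :=
  α x₀ * v x₁ x₂ x₃ x₄ - α x₁ * v x₀ x₂ x₃ x₄ + α x₂ * v x₀ x₁ x₃ x₄
    - α x₃ * v x₀ x₁ x₂ x₄ + α x₄ * v x₀ x₁ x₂ x₃

/-- An SU(2)-structure on a 5-dimensional real Lie algebra. -/
structure IsSU2Structure {V : Type*} [LieRing V] [LieAlgebra ℝ V]
    (η : V →ₗ[ℝ] ℝ) (ω₁ ω₂ ω₃ : V →ₗ[ℝ] V →ₗ[ℝ] ℝ) : Prop where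
  alt1 : ∀ x, ω₁ x x = 0
  alt2 : ∀ x, ω₂ x x = 0
  alt3 : ∀ x, ω₃ x x = 0
  vol : ∃ v : V → V → V → V → ℝ,
    wedge22 (fun a b => ω₁ a b) (fun a b => ω₁ a b) = v ∧
    wedge22 (fun a b => ω₂ a b) (fun a b => ω₂ a b) = v ∧
    wedge22 (fun a b => ω₃ a b) (fun a b => ω₃ a b) = v ∧
    wedge22 (fun a b => ω₁ a b) (fun a b => ω₂ a b) = (fun _ _ _ _ => 0) ∧
    wedge22 (fun a b => ω₁ a b) (fun a b => ω₃ a b) = (fun _ _ _ _ => 0) ∧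
    wedge22 (fun a b => ω₂ a b) (fun a b => ω₃ a b) = (fun _ _ _ _ => 0) ∧
    wedge41 v (fun x => η x) ≠ (fun _ _ _ _ _ => 0)
  compat : ∀ X Y : V, (∀ z, ω₃ X z = ω₁ Y z) → 0 ≤ ω₂ X Y

/-- A hypo-contact structure on a 5-dimensional real Lie algebra. -/
structure IsHypoContact {V : Type*} [LieRing V] [LieAlgebra ℝ V]
    (η : V →ₗ[ℝ] ℝ) (ω₁ ω₂ ω₃ : V →ₗ[ℝ] V →ₗ[ℝ] ℝ)
    extends IsSU2Structure η ω₁ ω₂ ω₃ : Prop where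
  contact : ∀ x y, dOne (fun z => η z) x y = -2 * ω₃ x y
  closed1 : ∀ x y z w, dThree (wedge12 (fun z => η z) (fun a b => ω₁ a b)) x y z w = 0
  closed2 : ∀ x y z w, dThree (wedge12 (fun z => η z) (fun a b => ω₂ a b)) x y z w = 0

/-- The Lie algebra `𝔥₁`. -/
def IsH1 (V : Type*) [LieRing V] [LieAlgebra ℝ V] : Prop :=
  ∃ X : Module.Basis (Fin 5) ℝ V,
    ⁅X 0, X 1⁆ = 0 ∧ ⁅X 0, X 2⁆ = 0 ∧ ⁅X 0, X 3⁆ = X 4 ∧ ⁅X 0, X 4⁆ = 0 ∧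
    ⁅X 1, X 2⁆ = X 4 ∧ ⁅X 1, X 3⁆ = 0 ∧ ⁅X 1, X 4⁆ = 0 ∧
    ⁅X 2, X 3⁆ = 0 ∧ ⁅X 2, X 4⁆ = 0 ∧ ⁅X 3, X 4⁆ = 0

/-- The Lie algebra `𝔥₂`. -/
def IsH2 (V : Type*) [LieRing V] [LieAlgebra ℝ V] : Prop :=
  ∃ X : Module.Basis (Fin 5) ℝ V,
    ⁅X 0, X 1⁆ = 0 ∧ ⁅X 0, X 2⁆ = 0 ∧ ⁅X 0, X 3⁆ = 0 ∧ ⁅X 0, X 4⁆ = (2 : ℝ) • X 0 ∧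
    ⁅X 1, X 2⁆ = X 0 ∧ ⁅X 1, X 3⁆ = 0 ∧ ⁅X 1, X 4⁆ = X 1 ∧
    ⁅X 2, X 3⁆ = 0 ∧ ⁅X 2, X 4⁆ = X 2 ∧ ⁅X 3, X 4⁆ = (-3 : ℝ) • X 3

/-- The Lie algebra `𝔥₃`. -/
def IsH3 (V : Type*) [LieRing V] [LieAlgebra ℝ V] : Prop :=
  ∃ X : Module.Basis (Fin 5) ℝ V,
    ⁅X 0, X 1⁆ = 0 ∧ ⁅X 0, X 2⁆ = 0 ∧ ⁅X 0, X 3⁆ = (2 : ℝ) • X 0 ∧ ⁅X 0, X 4⁆ = 0 ∧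
    ⁅X 1, X 2⁆ = X 0 ∧ ⁅X 1, X 3⁆ = X 1 ∧ ⁅X 1, X 4⁆ = -X 2 ∧
    ⁅X 2, X 3⁆ = X 2 ∧ ⁅X 2, X 4⁆ = X 1 ∧ ⁅X 3, X 4⁆ = 0

/-- The Lie algebra `𝔥₄`. -/
def IsH4 (V : Type*) [LieRing V] [LieAlgebra ℝ V] : Prop :=
  ∃ X : Module.Basis (Fin 5) ℝ V,
    ⁅X 0, X 1⁆ = 0 ∧ ⁅X 0, X 2⁆ = 0 ∧ ⁅X 0, X 3⁆ = X 0 ∧ ⁅X 0, X 4⁆ = 0 ∧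
    ⁅X 1, X 2⁆ = 0 ∧ ⁅X 1, X 3⁆ = 0 ∧ ⁅X 1, X 4⁆ = X 1 ∧
    ⁅X 2, X 3⁆ = -X 2 ∧ ⁅X 2, X 4⁆ = -X 2 ∧ ⁅X 3, X 4⁆ = 0

/-- The Lie algebra `𝔥₅`. -/
def IsH5 (V : Type*) [LieRing V] [LieAlgebra ℝ V] : Prop :=
  ∃ X : Module.Basis (Fin 5) ℝ V,
    ⁅X 0, X 1⁆ = 0 ∧ ⁅X 0, X 2⁆ = 0 ∧ ⁅X 0, X 3⁆ = 0 ∧ ⁅X 0, X 4⁆ = X 0 ∧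
    ⁅X 1, X 2⁆ = 0 ∧ ⁅X 1, X 3⁆ = X 0 ∧ ⁅X 1, X 4⁆ = 0 ∧
    ⁅X 2, X 3⁆ = X 1 ∧ ⁅X 2, X 4⁆ = -X 2 ∧ ⁅X 3, X 4⁆ = X 3

/-- `e^{ij}`, the wedge of the `i`-th and `j`-th dual basis 1-forms. -/
def bw {V : Type*} [LieRing V] [LieAlgebra ℝ V] (e : Module.Basis (Fin 5) ℝ V) (i j : Fin 5) :
    V →ₗ[ℝ] V →ₗ[ℝ] ℝ :=
  wedge1 (e.coord i) (e.coord j)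

/-- The content of Statement 8: structure equations, solvability, hypo-contact structure
and the isomorphism type, for a Lie algebra `V`. -/
def GoodLieAlgebra8 (a r : ℝ) (V : Type) [LieRing V] [LieAlgebra ℝ V] : Prop :=
  LieAlgebra.IsSolvable V ∧
  ∃ e : Module.Basis (Fin 5) ℝ V,
      (∀ x y : _, dOne (⇑(e.coord 0)) x y = 0) ∧
      (∀ x y : _, dOne (⇑(e.coord 1)) x y = (r) * bw e 0 1 x y + (a) * bw e 0 2 x y + (a) * bw e 1 3 x y + (a*(r^2+a^2)/(2*r)) * bw e 1 4 x y + (a^2/r) * bw e 2 3 x y + (a^2*(r^2+a^2)/(2*r^2)) * bw e 2 4 x y) ∧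
      (∀ x y : _, dOne (⇑(e.coord 2)) x y = (a) * bw e 0 1 x y + (a^2/r) * bw e 0 2 x y + (-r) * bw e 1 3 x y + (-((r^2+a^2)/2)) * bw e 1 4 x y + (-a) * bw e 2 3 x y + (-(a*(r^2+a^2)/(2*r))) * bw e 2 4 x y) ∧
      (∀ x y : _, dOne (⇑(e.coord 3)) x y = (-((r^2+a^2)^2/(2*r^2))) * bw e 0 4 x y + ((r^2+a^2)/r) * bw e 1 2 x y) ∧
      (∀ x y : _, dOne (⇑(e.coord 4)) x y = (-2) * bw e 0 3 x y + (-2) * bw e 1 2 x y) ∧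
      IsHypoContact (e.coord 4) (bw e 0 1 + bw e 2 3) (bw e 0 2 - bw e 1 3) (bw e 0 3 + bw e 1 2) ∧
      IsH5 V


/-!
The Lie algebra is realised on `𝔥₅` itself: on `ℝ⁵` carrying the bracket of `𝔥₅` in the basis
`X₁, …, X₅`, the basis `e` whose dual basis has the rows of `coframe8` as coordinates satisfies the
prescribed structure equations, so these equations need no separate Jacobi check. Solvability is
read off the derived series of `𝔥₅`. The algebraic SU(2) conditions hold for the standard forms of
any basis, and `dη = -2ω₃` and the closedness of `η ∧ ω₁`, `η ∧ ω₂` follow from the structure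
equations alone.
-/

section Forms

variable {V : Type*} [LieRing V] [LieAlgebra ℝ V]

lemma bw_apply (e : Module.Basis (Fin 5) ℝ V) (i j : Fin 5) (x y : V) :
    bw e i j x y = e.coord i x * e.coord j y - e.coord i y * e.coord j x := by
  simp only [bw, wedge1, LinearMap.mk₂_apply]

lemma apply_lie_eq_neg_dOne (α : V → ℝ) (x y : V) : α ⁅x, y⁆ = -dOne α x y :=
  (neg_neg _).symm

lemma isSU2Structure_basis (e : Module.Basis (Fin 5) ℝ V) :
    IsSU2Structure (e.coord 4) (bw e 0 1 + bw e 2 3) (bw e 0 2 - bw e 1 3)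
      (bw e 0 3 + bw e 1 2) where
  alt1 x := by simp only [LinearMap.add_apply, bw_apply]; ring
  alt2 x := by simp only [LinearMap.sub_apply, bw_apply]; ring
  alt3 x := by simp only [LinearMap.add_apply, bw_apply]; ring
  vol := by
    refine ⟨_, rfl, ?_, ?_, ?_, ?_, ?_, ?_⟩
    iterate 5
      funext x y z w
      simp only [wedge22, LinearMap.add_apply, LinearMap.sub_apply, bw_apply]
      ring
    intro h
    have :=
      congrFun (congrFun (congrFun (congrFun (congrFun h (e 0)) (e 1)) (e 2)) (e 3)) (e 4)
    simp [wedge41, wedge22, bw_apply] at this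
  compat X Y h := by
    -- Testing `i_X ω₃ = i_Y ω₁` on `e 0, …, e 3` forces `Y = (-X₂, X₃, X₀, -X₁, ⋯)`
    -- in coordinates, and then `ω₂ X Y = X₀² + X₁² + X₂² + X₃²`.
    have h0 := h (e 0)
    have h1 := h (e 1)
    have h2 := h (e 2)
    have h3 := h (e 3)
    simp only [LinearMap.add_apply, bw_apply, Module.Basis.coord_apply, Module.Basis.repr_self,
      Finsupp.single_apply, Fin.reduceEq, if_true, if_false] at h0 h1 h2 h3
    simp only [LinearMap.sub_apply, bw_apply, Module.Basis.coord_apply]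
    calc 0 ≤ e.repr X 0 ^ 2 + e.repr X 1 ^ 2 + e.repr X 2 ^ 2 + e.repr X 3 ^ 2 := by positivity
      _ = _ := by
        linear_combination e.repr X 0 * h3 - e.repr X 2 * h1 + e.repr X 1 * h2 - e.repr X 3 * h0

end Forms

def StructureEquations8 (a r : ℝ) {V : Type*} [LieRing V] [LieAlgebra ℝ V]
    (e : Module.Basis (Fin 5) ℝ V) : Prop :=
  (∀ x y : _, dOne (⇑(e.coord 0)) x y = 0) ∧
  (∀ x y : _, dOne (⇑(e.coord 1)) x y = (r) * bw e 0 1 x y + (a) * bw e 0 2 x y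
    + (a) * bw e 1 3 x y + (a*(r^2+a^2)/(2*r)) * bw e 1 4 x y + (a^2/r) * bw e 2 3 x y
    + (a^2*(r^2+a^2)/(2*r^2)) * bw e 2 4 x y) ∧
  (∀ x y : _, dOne (⇑(e.coord 2)) x y = (a) * bw e 0 1 x y + (a^2/r) * bw e 0 2 x y
    + (-r) * bw e 1 3 x y + (-((r^2+a^2)/2)) * bw e 1 4 x y + (-a) * bw e 2 3 x y
    + (-(a*(r^2+a^2)/(2*r))) * bw e 2 4 x y) ∧
  (∀ x y : _, dOne (⇑(e.coord 3)) x y = (-((r^2+a^2)^2/(2*r^2))) * bw e 0 4 x y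
    + ((r^2+a^2)/r) * bw e 1 2 x y) ∧
  (∀ x y : _, dOne (⇑(e.coord 4)) x y = (-2) * bw e 0 3 x y + (-2) * bw e 1 2 x y)

lemma isHypoContact_of_structureEquations8 {a r : ℝ} (hr : r ≠ 0) {V : Type*} [LieRing V]
    [LieAlgebra ℝ V] {e : Module.Basis (Fin 5) ℝ V} (he : StructureEquations8 a r e) :
    IsHypoContact (e.coord 4) (bw e 0 1 + bw e 2 3) (bw e 0 2 - bw e 1 3)
      (bw e 0 3 + bw e 1 2) where
  toIsSU2Structure := isSU2Structure_basis e
  contact x y := by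
    rw [he.2.2.2.2]
    simp only [LinearMap.add_apply]
    ring
  closed1 x y z w := by
    obtain ⟨h0, h1, h2, h3, h4⟩ := he
    simp only [dThree, wedge12, LinearMap.add_apply, bw_apply, apply_lie_eq_neg_dOne,
      h0, h1, h2, h3, h4]
    field_simp
    ring
  closed2 x y z w := by
    obtain ⟨h0, h1, h2, h3, h4⟩ := he
    simp only [dThree, wedge12, LinearMap.sub_apply, bw_apply, apply_lie_eq_neg_dOne,
      h0, h1, h2, h3, h4]
    field_simp
    ring

def h5Lie (x y : Fin 5 → ℝ) : Fin 5 → ℝ :=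
  ![x 0 * y 4 - x 4 * y 0 + (x 1 * y 3 - x 3 * y 1),
    x 2 * y 3 - x 3 * y 2,
    x 4 * y 2 - x 2 * y 4,
    x 3 * y 4 - x 4 * y 3,
    0]

-- Stated on `Fin 5 → ℝ`, where the pointwise simp lemmas apply; `H5` below carries it.
abbrev h5LieRing : LieRing (Fin 5 → ℝ) where
  bracket := h5Lie
  add_lie x y z := by
    funext k
    fin_cases k <;>
    simp only [h5Lie, Pi.add_apply, Fin.isValue, Fin.zero_eta, Fin.mk_one, Fin.reduceFinMk,
      Matrix.cons_val, Matrix.cons_val_zero, Matrix.cons_val_one] <;> ring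
  lie_add x y z := by
    funext k
    fin_cases k <;>
    simp only [h5Lie, Pi.add_apply, Fin.isValue, Fin.zero_eta, Fin.mk_one, Fin.reduceFinMk,
      Matrix.cons_val, Matrix.cons_val_zero, Matrix.cons_val_one] <;> ring
  lie_self x := by
    funext k
    fin_cases k <;>
    simp only [h5Lie, Pi.zero_apply, Fin.isValue, Fin.zero_eta, Fin.mk_one, Fin.reduceFinMk,
      Matrix.cons_val, Matrix.cons_val_zero, Matrix.cons_val_one] <;> ring
  leibniz_lie x y z := by
    funext k
    fin_cases k <;>
    simp only [h5Lie, Pi.add_apply, Fin.isValue, Fin.zero_eta, Fin.mk_one, Fin.reduceFinMk,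
      Matrix.cons_val, Matrix.cons_val_zero, Matrix.cons_val_one] <;> ring

def H5 : Type := Fin 5 → ℝ

namespace H5

instance : LieRing H5 := h5LieRing

instance : Module ℝ H5 := inferInstanceAs (Module ℝ (Fin 5 → ℝ))

lemma lie_apply (x y : H5) (i : Fin 5) : ⁅x, y⁆ i = h5Lie x y i := rfl

@[simp] lemma zero_apply (i : Fin 5) : (0 : H5) i = 0 := rfl

@[simp] lemma neg_apply (x : H5) (i : Fin 5) : (-x) i = -x i := rfl

@[simp] lemma smul_apply (c : ℝ) (x : H5) (i : Fin 5) : (c • x) i = c * x i := rfl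

instance : LieAlgebra ℝ H5 where
  lie_smul c x y := by
    funext k
    fin_cases k <;>
    simp only [lie_apply, smul_apply, h5Lie, Fin.isValue, Fin.zero_eta, Fin.mk_one,
      Fin.reduceFinMk, Matrix.cons_val, Matrix.cons_val_zero, Matrix.cons_val_one] <;> ring

def stdBasis : Module.Basis (Fin 5) ℝ H5 := Pi.basisFun ℝ (Fin 5)

lemma stdBasis_apply (i k : Fin 5) : stdBasis i k = if k = i then 1 else 0 := by
  change Pi.basisFun ℝ (Fin 5) i k = _
  rw [Pi.basisFun_apply, Pi.single_apply]

def vanishing (s : Set (Fin 5)) : Submodule ℝ H5 := Submodule.pi s fun _ => ⊥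

lemma mem_vanishing {s : Set (Fin 5)} {x : H5} : x ∈ vanishing s ↔ ∀ i ∈ s, x i = 0 :=
  Iff.rfl

end H5

lemma isH5_H5 : IsH5 H5 := by
  refine ⟨H5.stdBasis, ?_, ?_, ?_, ?_, ?_, ?_, ?_, ?_, ?_, ?_⟩ <;> funext k <;> fin_cases k <;>
    simp [H5.lie_apply, h5Lie, H5.stdBasis_apply]

lemma LieAlgebra.derivedSeries_succ_le_of_lie_mem {R L : Type*} [CommRing R] [LieRing L]
    [LieAlgebra R L] {k : ℕ} {S T : Submodule R L}
    (hS : ∀ x ∈ LieAlgebra.derivedSeries R L k, x ∈ S)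
    (hST : ∀ x ∈ S, ∀ y ∈ S, ⁅x, y⁆ ∈ T) :
    ∀ x ∈ LieAlgebra.derivedSeries R L (k + 1), x ∈ T := by
  intro x hx
  rw [LieAlgebra.derivedSeries_def, LieAlgebra.derivedSeriesOfIdeal_succ,
    ← LieSubmodule.mem_toSubmodule, LieSubmodule.lieIdeal_oper_eq_linear_span'] at hx
  refine Submodule.span_le.mpr ?_ hx
  rintro _ ⟨y, hy, z, hz, rfl⟩
  exact hST y (hS y hy) z (hS z hz)

lemma isSolvable_H5 : LieAlgebra.IsSolvable H5 := by
  have h1 : ∀ x ∈ LieAlgebra.derivedSeries ℝ H5 1, x ∈ H5.vanishing {4} :=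
    LieAlgebra.derivedSeries_succ_le_of_lie_mem (S := ⊤) (fun _ _ => trivial) fun x _ y _ => by
      simp [H5.mem_vanishing, H5.lie_apply, h5Lie]
  have h2 : ∀ x ∈ LieAlgebra.derivedSeries ℝ H5 2, x ∈ H5.vanishing {2, 3, 4} :=
    LieAlgebra.derivedSeries_succ_le_of_lie_mem h1 fun x hx y hy => by
      simp only [H5.mem_vanishing, Set.mem_singleton_iff, forall_eq] at hx hy
      simp [H5.mem_vanishing, H5.lie_apply, h5Lie, hx, hy]
  have h3 : ∀ x ∈ LieAlgebra.derivedSeries ℝ H5 3, x ∈ (⊥ : Submodule ℝ H5) :=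
    LieAlgebra.derivedSeries_succ_le_of_lie_mem h2 fun x hx y hy => by
      simp only [H5.mem_vanishing, Set.mem_insert_iff, Set.mem_singleton_iff, forall_eq_or_imp,
        forall_eq] at hx hy
      rw [Submodule.mem_bot]
      funext k
      fin_cases k <;> simp [H5.lie_apply, h5Lie, hx, hy]
  exact LieAlgebra.IsSolvable.mk (k := 3) ((LieSubmodule.eq_bot_iff _).mpr h3)

-- Row `k` of `coframe8` is `eᵏ` in the coordinates of `H5`; `frame8` is its inverse.
def coframe8 (a r : ℝ) : Matrix (Fin 5) (Fin 5) ℝ :=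
  !![0, 0, 0, 0, r / (r^2 + a^2);
     0, 2 * a * (r^2 + a^2) / r, 0, r, 0;
     0, -2 * (r^2 + a^2), 0, a, 0;
     -2 * (r^2 + a^2)^3 / r^2, 0, 1, 0, 0;
     4 * (r^2 + a^2)^2 / r, 0, 2 * r / (r^2 + a^2), 0, 0]

def frame8 (a r : ℝ) : Matrix (Fin 5) (Fin 5) ℝ :=
  !![0, 0, 0, -r^2 / (4 * (r^2 + a^2)^3), r / (8 * (r^2 + a^2)^2);
     0, a * r / (2 * (r^2 + a^2)^2), -r^2 / (2 * (r^2 + a^2)^2), 0, 0;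
     0, 0, 0, 1 / 2, (r^2 + a^2) / (4 * r);
     0, r / (r^2 + a^2), a / (r^2 + a^2), 0, 0;
     (r^2 + a^2) / r, 0, 0, 0, 0]

lemma coframe8_mul_frame8 {a r : ℝ} (hr : r ≠ 0) : coframe8 a r * frame8 a r = 1 := by
  have hs : r^2 + a^2 ≠ 0 := by positivity
  ext i j
  fin_cases i <;> fin_cases j <;>
    simp only [Matrix.mul_apply, Fin.sum_univ_five, coframe8, frame8, Matrix.of_apply,
      Matrix.one_apply_eq, Matrix.one_apply_ne, ne_eq, Fin.reduceEq, not_false_eq_true,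
      Fin.zero_eta, Fin.mk_one, Fin.reduceFinMk, Fin.isValue, Matrix.cons_val', Matrix.cons_val,
      Matrix.cons_val_zero, Matrix.cons_val_one, Matrix.cons_val_fin_one] <;>
    field_simp <;> ring

def basis8 (a r : ℝ) (hr : r ≠ 0) : Module.Basis (Fin 5) ℝ H5 :=
  have h := coframe8_mul_frame8 (a := a) hr
  .ofEquivFun (Matrix.toLin'OfInv (mul_eq_one_comm.mp h) h : H5 ≃ₗ[ℝ] Fin 5 → ℝ)

lemma basis8_coord {a r : ℝ} (hr : r ≠ 0) (i : Fin 5) (x : H5) :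
    (basis8 a r hr).coord i x = Matrix.mulVec (coframe8 a r) x i :=
  rfl

lemma structureEquations8_basis8 {a r : ℝ} (hr : r ≠ 0) :
    StructureEquations8 a r (basis8 a r hr) := by
  have hs : r^2 + a^2 ≠ 0 := by positivity
  refine ⟨?_, ?_, ?_, ?_, ?_⟩ <;> intro x y <;>
    simp only [dOne, bw_apply, basis8_coord, Matrix.mulVec, dotProduct, Fin.sum_univ_five,
      coframe8, H5.lie_apply, h5Lie, Matrix.of_apply, Fin.isValue, Matrix.cons_val',
      Matrix.cons_val, Matrix.cons_val_zero, Matrix.cons_val_one, Matrix.cons_val_fin_one] <;>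
    field_simp <;> ring

theorem exists_good_lie_algebra8 (a r : ℝ) (hr : r ≠ 0) :
    ∃ (V : Type) (i₁ : LieRing V) (i₂ : @LieAlgebra ℝ V _ i₁),
      @GoodLieAlgebra8 a r V i₁ i₂ := by
  have he := structureEquations8_basis8 (a := a) hr
  have ⟨h0, h1, h2, h3, h4⟩ := he
  exact ⟨H5, inferInstance, inferInstance, isSolvable_H5, basis8 a r hr, h0, h1, h2, h3, h4,
    isHypoContact_of_structureEquations8 hr he, isH5_H5⟩

end
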